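/- arXiv:2412.17187 — 2 statements merged into one kernel-verified Lean document; each statement's English description precedes it below -/
import Mathlib

section
/- Let R be a gr-prime graded ring and I a nonzero graded one-sided ideal of R. If d is a nonzero homogeneous derivation of R, then the restriction of d to I is nonzero. -/
def IsHomog {G R : Type*} [Ring R] (A : G → AddSubgroup R) (a : R) : Prop := ∃ g, a ∈ A g

def GrPrime {G R : Type*} [Ring R] (A : G → AddSubgroup R) : Prop :=
  ∀ a b : R, IsHomog A a → IsHomog A b → (∀ r : R, a * r * b = 0) → a = 0 ∨ b = 0

def IsHomogDer {G R : Type*} [Ring R] (A : G → AddSubgroup R) (d : R → R) : Prop :=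
  (∀ x y : R, d (x + y) = d x + d y) ∧
  (∀ x y : R, d (x * y) = d x * y + x * d y) ∧
  (∀ a : R, IsHomog A a → IsHomog A (d a))

def IsGenHomogDer {G R : Type*} [Ring R] (A : G → AddSubgroup R) (F d : R → R) : Prop :=
  (∀ x y : R, F (x + y) = F x + F y) ∧
  IsHomogDer A d ∧
  (∀ x y : R, F (x * y) = F x * y + x * d y) ∧
  (∀ a : R, IsHomog A a → IsHomog A (F a))

/-!
Suppose `d` vanishes on `I` and pick a nonzero homogeneous `y ∈ I` (a component of any nonzero
element of `I`). For homogeneous `a` and any `s`, the Leibniz rule applied to `a * (s * y)` (left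
ideal) or `(y * s) * a` (right ideal) gives `d a * s * y = 0` or `y * s * d a = 0`; since `d a` is
homogeneous, gr-primeness forces `d a = 0`. An additive map vanishing on homogeneous elements is zero.
-/

section Leibniz

variable {R : Type*} [Ring R] {d : R → R} {I : AddSubgroup R}

theorem apply_mul_eq_zero_of_left_closed (hmul : ∀ x y : R, d (x * y) = d x * y + x * d y)
    (hdI : ∀ x ∈ I, d x = 0) (hL : ∀ r : R, ∀ x ∈ I, r * x ∈ I) (a : R) {y : R}
    (hy : y ∈ I) : d a * y = 0 := by
  have h := hmul a y
  rwa [hdI _ (hL a y hy), hdI y hy, mul_zero, add_zero, eq_comm] at h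

theorem mul_apply_eq_zero_of_right_closed (hmul : ∀ x y : R, d (x * y) = d x * y + x * d y)
    (hdI : ∀ x ∈ I, d x = 0) (hR : ∀ r : R, ∀ x ∈ I, x * r ∈ I) (a : R) {y : R}
    (hy : y ∈ I) : y * d a = 0 := by
  have h := hmul y a
  rwa [hdI _ (hR a y hy), hdI y hy, zero_mul, zero_add, eq_comm] at h

end Leibniz

section Graded

variable {G R : Type*} [Ring R] (A : G → AddSubgroup R)

theorem exists_isHomog_ne_zero_mem [DecidableEq G] [DirectSum.Decomposition A]
    {I : AddSubgroup R} (hI0 : I ≠ ⊥)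
    (hIgr : ∀ x ∈ I, ∀ g : G, (DirectSum.decompose A x g : R) ∈ I) :
    ∃ y ∈ I, IsHomog A y ∧ y ≠ 0 := by
  obtain ⟨x, hxI, hx0⟩ := (AddSubgroup.bot_or_exists_ne_zero I).resolve_left hI0
  have hdx : DirectSum.decompose A x ≠ 0 := by
    rwa [← DirectSum.decompose_zero, (DirectSum.decompose A).injective.ne_iff]
  obtain ⟨g, hg⟩ := DFunLike.ne_iff.mp hdx
  exact ⟨_, hIgr x hxI g, ⟨g, SetLike.coe_mem _⟩, fun h => hg (Subtype.ext h)⟩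

theorem eq_zero_of_forall_isHomog [DecidableEq G] [DirectSum.Decomposition A] {d : R → R}
    (hadd : ∀ x y : R, d (x + y) = d x + d y) (hhom : ∀ a : R, IsHomog A a → d a = 0) : d = 0 :=
  funext <| DirectSum.Decomposition.inductionOn A (motive := fun r => d r = 0)
    (AddMonoidHom.mk' d hadd).map_zero (fun m => hhom _ ⟨_, m.2⟩)
    fun m m' hm hm' => by rw [hadd, hm, hm', add_zero]

theorem IsHomogDer.apply_eq_zero_of_isHomog (hP : GrPrime A) {d : R → R} (hd : IsHomogDer A d)
    {I : AddSubgroup R}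
    (hIone : (∀ (r : R), ∀ x ∈ I, r * x ∈ I) ∨ (∀ (r : R), ∀ x ∈ I, x * r ∈ I))
    (hdI : ∀ x ∈ I, d x = 0) {y : R} (hyI : y ∈ I) (hy : IsHomog A y) (hy0 : y ≠ 0)
    {a : R} (ha : IsHomog A a) : d a = 0 := by
  rcases hIone with hL | hR
  · refine (hP _ _ (hd.2.2 a ha) hy fun s => ?_).resolve_right hy0
    rw [mul_assoc]
    exact apply_mul_eq_zero_of_left_closed hd.2.1 hdI hL a (hL s y hyI)
  · refine (hP _ _ hy (hd.2.2 a ha) fun s => ?_).resolve_left hy0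
    exact mul_apply_eq_zero_of_right_closed hd.2.1 hdI hR a (hR s y hyI)

end Graded

theorem stmt6 {G R : Type*} [AddCommGroup G] [DecidableEq G] [Ring R] (A : G → AddSubgroup R) [GradedRing A] (hP : GrPrime A)
    (I : AddSubgroup R) (hI0 : I ≠ ⊥)
    (hIone : (∀ (r : R), ∀ x ∈ I, r * x ∈ I) ∨ (∀ (r : R), ∀ x ∈ I, x * r ∈ I))
    (hIgr : ∀ x ∈ I, ∀ g : G, (DirectSum.decompose A x g : R) ∈ I)
    (d : R → R) (hd : IsHomogDer A d) (hd0 : d ≠ 0) :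
    ∃ x ∈ I, d x ≠ 0 := by
  by_contra! hdI
  obtain ⟨y, hyI, hy, hy0⟩ := exists_isHomog_ne_zero_mem A hI0 hIgr
  exact hd0 <| eq_zero_of_forall_isHomog A hd.1 fun a ha =>
    hd.apply_eq_zero_of_isHomog A hP hIone hdI hyI hy hy0 ha
end

section
/- Let R be a gr-prime graded ring and I a nonzero graded ideal. Suppose F₁ and F₂ are generalized homogeneous derivations of R associated with nonzero homogeneous derivations d₁ and d₂ respectively, such that F₁(x)F₂(y) − xy ∈ Z(R) for all x, y ∈ I. Then R is commutative. -/
/-!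
Write `Φ(x, y) = F₁(x)F₂(y) - xy`. Expanding `Φ(x, yz) = Φ(x, y)z + F₁(x) y d₂(z)` and using that
`Φ` is central shows that `F₁(x) y d₂(z)` commutes with `z`; substituting `xw` for `x` and then
`sx` for `x` gives `[s, z] x d₁(w) y d₂(z) = 0` for `x, w, y ∈ I`. For homogeneous `s, z`,
gr-primeness (applied through a nonzero homogeneous element of `I`) turns this into: `d₂(z) = 0`,
or `[s, z] = 0`, or `d₁` vanishes on `I` and hence everywhere. If `d₂(z) = 0` then `Φ(x, y)z` is
central too, which forces `Φ(x, y)[z, t] = 0`; so a non-commuting homogeneous pair `z, t` would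
make `Φ` vanish on `I`. But then `F₁(x) y d₂(z) = 0` kills `F₁` at a nonzero homogeneous `e ∈ I`,
and `Φ(e, re) = 0` gives `eRe = 0`. Hence homogeneous elements commute, and so does everything.
-/

open DirectSum

section Accessors

variable {G R : Type*} [Ring R] {A : G → AddSubgroup R}

theorem IsHomogDer.map_mul {d : R → R} (hd : IsHomogDer A d) (x y : R) :
    d (x * y) = d x * y + x * d y :=
  hd.2.1 x y

theorem IsHomogDer.isHomog {d : R → R} (hd : IsHomogDer A d) {a : R} (ha : IsHomog A a) :
    IsHomog A (d a) :=
  hd.2.2 a ha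

theorem IsGenHomogDer.isHomogDer {F d : R → R} (hF : IsGenHomogDer A F d) : IsHomogDer A d :=
  hF.2.1

theorem IsGenHomogDer.map_mul {F d : R → R} (hF : IsGenHomogDer A F d) (x y : R) :
    F (x * y) = F x * y + x * d y :=
  hF.2.2.1 x y

theorem IsGenHomogDer.isHomog {F d : R → R} (hF : IsGenHomogDer A F d) {a : R}
    (ha : IsHomog A a) : IsHomog A (F a) :=
  hF.2.2.2 a ha

end Accessors

section Graded

variable {G R : Type*} [AddCancelCommMonoid G] [DecidableEq G] [Ring R] {A : G → AddSubgroup R}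
  [GradedRing A]

theorem IsHomog.commutator {a b : R} (ha : IsHomog A a) (hb : IsHomog A b) :
    IsHomog A (a * b - b * a) := by
  obtain ⟨i, ha⟩ := ha
  obtain ⟨j, hb⟩ := hb
  refine ⟨i + j, sub_mem (SetLike.mul_mem_graded ha hb) ?_⟩
  simpa only [add_comm j i] using SetLike.mul_mem_graded hb ha

theorem eq_zero_of_forall_decompose_eq_zero {c : R} (h : ∀ j, (decompose A c j : R) = 0) :
    c = 0 := by
  classical
  rw [← sum_support_decompose A c]
  exact Finset.sum_eq_zero fun j _ => h j

theorem exists_isHomog_mem_ne_zero {I : AddSubgroup R} (hI0 : I ≠ ⊥)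
    (hIgr : ∀ x ∈ I, ∀ g : G, (decompose A x g : R) ∈ I) : ∃ e ∈ I, IsHomog A e ∧ e ≠ 0 := by
  by_contra! h
  refine hI0 ((AddSubgroup.eq_bot_iff_forall I).2 fun x hx => ?_)
  exact eq_zero_of_forall_decompose_eq_zero fun g => h _ (hIgr x hx g) ⟨g, SetLike.coe_mem _⟩

theorem commute_of_forall_isHomog_commute
    (h : ∀ a b : R, IsHomog A a → IsHomog A b → Commute a b) (a b : R) : Commute a b := by
  induction a using DirectSum.Decomposition.inductionOn A with
  | zero => exact Commute.zero_left b
  | homogeneous a =>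
    induction b using DirectSum.Decomposition.inductionOn A with
    | zero => exact Commute.zero_right _
    | homogeneous b => exact h _ _ ⟨_, a.2⟩ ⟨_, b.2⟩
    | add b b' hb hb' => exact hb.add_right hb'
  | add a a' ha ha' => exact ha.add_left ha'

/-- A homogeneous component of `a * r * c` is `a * r` times a component of `c`, so the
gr-prime condition applies componentwise. -/
theorem GrPrime.eq_zero_of_forall_mul_mul_eq_zero_left (hP : GrPrime A) {a c : R}
    (ha : IsHomog A a) (ha0 : a ≠ 0) (h : ∀ r, a * r * c = 0) : c = 0 := by
  obtain ⟨i, ha⟩ := ha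
  refine eq_zero_of_forall_decompose_eq_zero (A := A) fun j => ?_
  refine (hP a _ ⟨i, ha⟩ ⟨j, SetLike.coe_mem _⟩ fun r => ?_).resolve_left ha0
  induction r using DirectSum.Decomposition.inductionOn A with
  | zero => simp
  | homogeneous r =>
    rw [← coe_decompose_mul_add_of_left_mem (𝒜 := A) (SetLike.mul_mem_graded ha r.2), h]
    simp
  | add r s hr hs => rw [mul_add, add_mul, hr, hs, add_zero]

theorem GrPrime.eq_zero_of_forall_mul_mul_eq_zero_right (hP : GrPrime A) {b c : R}
    (hb : IsHomog A b) (hb0 : b ≠ 0) (h : ∀ r, c * r * b = 0) : c = 0 := by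
  obtain ⟨i, hb⟩ := hb
  refine eq_zero_of_forall_decompose_eq_zero (A := A) fun j => ?_
  refine (hP _ b ⟨j, SetLike.coe_mem _⟩ ⟨i, hb⟩ fun r => ?_).resolve_right hb0
  induction r using DirectSum.Decomposition.inductionOn A with
  | zero => simp
  | homogeneous r =>
    rw [mul_assoc, ← coe_decompose_mul_add_of_right_mem (𝒜 := A) (SetLike.mul_mem_graded r.2 hb),
      ← mul_assoc, h]
    simp
  | add r s hr hs => rw [mul_add, add_mul, hr, hs, add_zero]

section Ideal

variable {I : TwoSidedIdeal R}

theorem GrPrime.eq_zero_of_forall_mem_mul_mul_eq_zero_left (hP : GrPrime A)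
    (hI : ∃ e ∈ I, IsHomog A e ∧ e ≠ 0) {a c : R} (ha : IsHomog A a) (ha0 : a ≠ 0)
    (h : ∀ y ∈ I, a * y * c = 0) : c = 0 := by
  obtain ⟨e, heI, he, he0⟩ := hI
  refine hP.eq_zero_of_forall_mul_mul_eq_zero_left he he0 fun r => ?_
  refine hP.eq_zero_of_forall_mul_mul_eq_zero_left ha ha0 fun t => ?_
  simpa only [mul_assoc] using h (t * e * r) (I.mul_mem_right _ _ (I.mul_mem_left _ _ heI))

theorem GrPrime.eq_zero_of_forall_mem_mul_mul_eq_zero_right (hP : GrPrime A)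
    (hI : ∃ e ∈ I, IsHomog A e ∧ e ≠ 0) {b c : R} (hb : IsHomog A b) (hb0 : b ≠ 0)
    (h : ∀ y ∈ I, c * y * b = 0) : c = 0 := by
  obtain ⟨e, heI, he, he0⟩ := hI
  refine hP.eq_zero_of_forall_mul_mul_eq_zero_right he he0 fun r => ?_
  refine hP.eq_zero_of_forall_mul_mul_eq_zero_right hb hb0 fun t => ?_
  simpa only [mul_assoc] using h (r * e * t) (I.mul_mem_right _ _ (I.mul_mem_left _ _ heI))

theorem GrPrime.eq_zero_of_map_mul_of_forall_mem_eq_zero (hP : GrPrime A)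
    (hI : ∃ e ∈ I, IsHomog A e ∧ e ≠ 0) {d : R → R}
    (hd : ∀ x y, d (x * y) = d x * y + x * d y) (hdI : ∀ x ∈ I, d x = 0) : d = 0 := by
  obtain ⟨e, heI, he, he0⟩ := hI
  funext r
  refine hP.eq_zero_of_forall_mul_mul_eq_zero_left he he0 fun s => ?_
  have hes : e * s ∈ I := I.mul_mem_right _ _ heI
  simpa [hdI _ hes, hdI _ (I.mul_mem_right _ _ hes)] using (hd (e * s) r).symm

end Ideal

end Graded

section Identities

variable {R : Type*} [Ring R] {I : TwoSidedIdeal R} {F1 d1 F2 d2 : R → R}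

theorem mul_map_mul_sub_mul (hF2 : ∀ x y, F2 (x * y) = F2 x * y + x * d2 y) (x y z : R) :
    F1 x * F2 (y * z) - x * (y * z) = (F1 x * F2 y - x * y) * z + F1 x * y * d2 z := by
  rw [hF2]
  noncomm_ring

theorem commute_map_mul_mul_map
    (hF2 : ∀ x y, F2 (x * y) = F2 x * y + x * d2 y)
    (hcen : ∀ x ∈ I, ∀ y ∈ I, ∀ r, Commute (F1 x * F2 y - x * y) r)
    {x y : R} (hx : x ∈ I) (hy : y ∈ I) (z : R) : Commute (F1 x * y * d2 z) z := by
  have h := hcen x hx (y * z) (I.mul_mem_right _ _ hy) z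
  rw [mul_map_mul_sub_mul hF2] at h
  simpa only [add_sub_cancel_left] using h.sub_left ((hcen x hx y hy z).mul_left (.refl z))

theorem commute_mul_map_mul_mul_map
    (hF1 : ∀ x y, F1 (x * y) = F1 x * y + x * d1 y)
    (hF2 : ∀ x y, F2 (x * y) = F2 x * y + x * d2 y)
    (hcen : ∀ x ∈ I, ∀ y ∈ I, ∀ r, Commute (F1 x * F2 y - x * y) r)
    {x w y : R} (hx : x ∈ I) (hw : w ∈ I) (hy : y ∈ I) (z : R) :
    Commute (x * d1 w * y * d2 z) z := by
  have h : x * d1 w * y * d2 z = F1 (x * w) * y * d2 z - F1 x * (w * y) * d2 z := by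
    rw [hF1]
    noncomm_ring
  rw [h]
  exact (commute_map_mul_mul_map hF2 hcen (I.mul_mem_right _ _ hx) hy z).sub_left
    (commute_map_mul_mul_map hF2 hcen hx (I.mul_mem_right _ _ hw) z)

theorem commutator_mul_mul_map_mul_mul_map_eq_zero
    (hF1 : ∀ x y, F1 (x * y) = F1 x * y + x * d1 y)
    (hF2 : ∀ x y, F2 (x * y) = F2 x * y + x * d2 y)
    (hcen : ∀ x ∈ I, ∀ y ∈ I, ∀ r, Commute (F1 x * F2 y - x * y) r)
    (s : R) {x w y : R} (hx : x ∈ I) (hw : w ∈ I) (hy : y ∈ I) (z : R) :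
    (s * z - z * s) * x * d1 w * y * d2 z = 0 := by
  have hc := (commute_mul_map_mul_mul_map hF1 hF2 hcen hx hw hy z).eq
  have hsc := (commute_mul_map_mul_mul_map hF1 hF2 hcen (I.mul_mem_left s _ hx) hw hy z).eq
  calc (s * z - z * s) * x * d1 w * y * d2 z
      = s * (z * (x * d1 w * y * d2 z)) - z * (s * x * d1 w * y * d2 z) := by noncomm_ring
    _ = s * (x * d1 w * y * d2 z * z) - s * x * d1 w * y * d2 z * z := by rw [hc, hsc]
    _ = 0 := by noncomm_ring

end Identities

section GenHomogDer

variable {G R : Type*} [AddCancelCommMonoid G] [DecidableEq G] [Ring R] {A : G → AddSubgroup R}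
  [GradedRing A] {I : TwoSidedIdeal R} {F1 d1 F2 d2 : R → R}

theorem GrPrime.exists_mul_map_sub_mul_ne_zero (hP : GrPrime A)
    (hI : ∃ e ∈ I, IsHomog A e ∧ e ≠ 0) (hF1 : IsGenHomogDer A F1 d1)
    (hF2 : IsGenHomogDer A F2 d2) (hd2 : d2 ≠ 0) :
    ∃ x ∈ I, ∃ y ∈ I, F1 x * F2 y - x * y ≠ 0 := by
  by_contra! h0
  obtain ⟨e, heI, he, he0⟩ := hI
  have hF1e : F1 e = 0 := by
    by_contra hF1e
    refine hd2 (hP.eq_zero_of_map_mul_of_forall_mem_eq_zero ⟨e, heI, he, he0⟩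
      hF2.isHomogDer.map_mul fun z _ => ?_)
    refine hP.eq_zero_of_forall_mem_mul_mul_eq_zero_left ⟨e, heI, he, he0⟩ (hF1.isHomog he)
      hF1e fun y hy => ?_
    simpa [h0 e heI y hy, h0 e heI _ (I.mul_mem_right _ _ hy)] using
      (mul_map_mul_sub_mul (F1 := F1) hF2.map_mul e y z).symm
  refine he0 (hP.eq_zero_of_forall_mul_mul_eq_zero_left he he0 fun r => ?_)
  simpa [hF1e, mul_assoc] using h0 e heI (r * e) (I.mul_mem_left _ _ heI)

theorem GrPrime.mul_map_sub_mul_eq_zero_of_not_commute (hP : GrPrime A)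
    (hF2 : ∀ x y, F2 (x * y) = F2 x * y + x * d2 y)
    (hcen : ∀ x ∈ I, ∀ y ∈ I, ∀ r, Commute (F1 x * F2 y - x * y) r)
    {z t : R} (hz : IsHomog A z) (hd2z : d2 z = 0) (ht : IsHomog A t) (hzt : ¬Commute z t)
    {x y : R} (hx : x ∈ I) (hy : y ∈ I) : F1 x * F2 y - x * y = 0 := by
  set c := F1 x * F2 y - x * y
  have hcz : ∀ r, Commute (c * z) r := by
    intro r
    simpa [mul_map_mul_sub_mul hF2, hd2z] using hcen x hx (y * z) (I.mul_mem_right _ _ hy) r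
  have hc : ∀ r, c * (z * r - r * z) = 0 := fun r =>
    calc c * (z * r - r * z) = c * z * r - c * r * z := by noncomm_ring
      _ = r * (c * z) - r * c * z := by rw [(hcz r).eq, (hcen x hx y hy r).eq]
      _ = 0 := by noncomm_ring
  refine hP.eq_zero_of_forall_mul_mul_eq_zero_right (hz.commutator ht) (sub_ne_zero.2 hzt)
    fun r => ?_
  rw [(hcen x hx y hy r).eq, mul_assoc, hc, mul_zero]

theorem GrPrime.commute_of_map_ne_zero (hP : GrPrime A) (hI : ∃ e ∈ I, IsHomog A e ∧ e ≠ 0)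
    (hF1 : ∀ x y, F1 (x * y) = F1 x * y + x * d1 y) (hd1 : IsHomogDer A d1) (hd1ne : d1 ≠ 0)
    (hF2 : ∀ x y, F2 (x * y) = F2 x * y + x * d2 y) (hd2 : IsHomogDer A d2)
    (hcen : ∀ x ∈ I, ∀ y ∈ I, ∀ r, Commute (F1 x * F2 y - x * y) r)
    {z s : R} (hz : IsHomog A z) (hd2z : d2 z ≠ 0) (hs : IsHomog A s) : Commute s z := by
  by_contra hsz
  refine hd1ne (hP.eq_zero_of_map_mul_of_forall_mem_eq_zero hI hd1.map_mul fun w hw => ?_)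
  refine hP.eq_zero_of_forall_mem_mul_mul_eq_zero_left hI (hs.commutator hz)
    (sub_ne_zero.2 hsz) fun x hx => ?_
  refine hP.eq_zero_of_forall_mem_mul_mul_eq_zero_right hI (hd2.isHomog hz) hd2z fun y hy => ?_
  exact commutator_mul_mul_map_mul_mul_map_eq_zero hF1 hF2 hcen s hx hw hy z

theorem GrPrime.commute_of_isHomog (hP : GrPrime A) (hI : ∃ e ∈ I, IsHomog A e ∧ e ≠ 0)
    (hF1 : IsGenHomogDer A F1 d1) (hF2 : IsGenHomogDer A F2 d2) (hd1 : d1 ≠ 0) (hd2 : d2 ≠ 0)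
    (hcen : ∀ x ∈ I, ∀ y ∈ I, ∀ r, Commute (F1 x * F2 y - x * y) r)
    {s z : R} (hs : IsHomog A s) (hz : IsHomog A z) : Commute s z := by
  by_cases hd2z : d2 z = 0
  · by_contra hsz
    obtain ⟨x, hx, y, hy, hxy⟩ := hP.exists_mul_map_sub_mul_ne_zero hI hF1 hF2 hd2
    exact hxy (hP.mul_map_sub_mul_eq_zero_of_not_commute hF2.map_mul hcen hz hd2z hs
      (fun hzs => hsz hzs.symm) hx hy)
  · exact hP.commute_of_map_ne_zero hI hF1.map_mul hF1.isHomogDer hd1 hF2.map_mul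
      hF2.isHomogDer hcen hz hd2z hs

end GenHomogDer

theorem stmt14 {G R : Type*} [AddCommGroup G] [DecidableEq G] [Ring R] (A : G → AddSubgroup R) [GradedRing A] (hP : GrPrime A)
    (I : AddSubgroup R) (hI0 : I ≠ ⊥)
    (hIl : ∀ (r : R), ∀ x ∈ I, r * x ∈ I) (hIr : ∀ (r : R), ∀ x ∈ I, x * r ∈ I)
    (hIgr : ∀ x ∈ I, ∀ g : G, (DirectSum.decompose A x g : R) ∈ I)
    (F1 d1 F2 d2 : R → R) (hF1 : IsGenHomogDer A F1 d1) (hF2 : IsGenHomogDer A F2 d2)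
    (hd1 : d1 ≠ 0) (hd2 : d2 ≠ 0)
    (h : ∀ x ∈ I, ∀ y ∈ I, ∀ r : R, (F1 x * F2 y - x * y) * r = r * (F1 x * F2 y - x * y)) :
    ∀ a b : R, a * b = b * a := by
  let J : TwoSidedIdeal R := .mk' I I.zero_mem I.add_mem I.neg_mem (hIl _ _) (hIr _ _)
  have hJ {x : R} : x ∈ J ↔ x ∈ I := TwoSidedIdeal.mem_mk' ..
  obtain ⟨e, heI, he⟩ := exists_isHomog_mem_ne_zero hI0 hIgr
  have hcen : ∀ x ∈ J, ∀ y ∈ J, ∀ r, Commute (F1 x * F2 y - x * y) r :=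
    fun x hx y hy => h x (hJ.1 hx) y (hJ.1 hy)
  exact commute_of_forall_isHomog_commute fun a b ha hb =>
    hP.commute_of_isHomog ⟨e, hJ.2 heI, he⟩ hF1 hF2 hd1 hd2 hcen ha hb
end
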